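/- arXiv:1011.0046 — 11 statements merged into one kernel-verified Lean document; each statement's English description precedes it below -/
import Mathlib

section
/- The set of codes of total computable functions is not recursively enumerable: there is no partial computable function whose domain is exactly the set of total codes. -/
open Nat.Partrec Nat.Partrec.Code

theorem total_codes_not_re :
    ¬ REPred (fun c : Nat.Partrec.Code => ∀ n, (c.eval n).Dom) := by
  intro h
  -- the test bit: does c (decoded from m.unpair.1) halt on 0 within m.unpair.2 steps?
  have hb : Computable fun m : ℕ =>
      (evaln m.unpair.2 (Denumerable.ofNat Nat.Partrec.Code m.unpair.1) 0).isSome := by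
    have : Primrec fun m : ℕ =>
        (evaln m.unpair.2 (Denumerable.ofNat Nat.Partrec.Code m.unpair.1) 0).isSome :=
      Primrec.option_isSome.comp <|
        primrec_evaln.comp <|
          ((Primrec.snd.comp Primrec.unpair).pair
            ((Primrec.ofNat _).comp (Primrec.fst.comp Primrec.unpair))).pair (Primrec.const 0)
    exact this.to_comp
  -- the diagonal partial function
  set F : ℕ →. ℕ := fun m =>
    (Part.assert ((evaln m.unpair.2 (Denumerable.ofNat Nat.Partrec.Code m.unpair.1) 0).isSome
      = false) fun _ => Part.some ()).map fun _ => 0 with hF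
  have hbp : Primrec fun m : ℕ =>
      (evaln m.unpair.2 (Denumerable.ofNat Nat.Partrec.Code m.unpair.1) 0).isSome :=
    Primrec.option_isSome.comp <|
      primrec_evaln.comp <|
        ((Primrec.snd.comp Primrec.unpair).pair
          ((Primrec.ofNat _).comp (Primrec.fst.comp Primrec.unpair))).pair (Primrec.const 0)
  have hcp : ComputablePred fun m : ℕ =>
      (evaln m.unpair.2 (Denumerable.ofNat Nat.Partrec.Code m.unpair.1) 0).isSome = false :=
    ComputablePred.computable_iff.2
      ⟨_, (Primrec.not.comp hbp).to_comp, by funext m; simp⟩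
  have hFre := hcp.to_re
  have hFp : Nat.Partrec F := by
    have := Partrec.map hFre (Computable.const (0 : ℕ)).to₂
    exact Partrec.nat_iff.1 this
  obtain ⟨cF, ecF⟩ := exists_code.1 hFp
  -- domain characterization
  have hdom : ∀ (c : Nat.Partrec.Code) (k : ℕ),
      ((cF.curry (Encodable.encode c)).eval k).Dom ↔ ¬ (evaln k c 0).isSome := by
    intro c k
    rw [eval_curry, ecF]
    simp only [hF, Nat.unpair_pair, Denumerable.ofNat_encode, Part.map_Dom]
    constructor
    · rintro ⟨h1, -⟩; simp_all
    · intro h1; exact ⟨by simp_all, trivial⟩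
  -- g is computable
  have hg : Computable fun c : Nat.Partrec.Code => cF.curry (Encodable.encode c) :=
    (primrec₂_curry.comp (Primrec.const cF) Primrec.encode).to_comp
  -- compose
  have h2 : REPred fun c : Nat.Partrec.Code => ¬ (eval c 0).Dom := by
    have h3 := Partrec.comp h hg
    refine REPred.of_eq h3 fun c => ?_
    constructor
    · intro hall hd
      obtain ⟨x, hx⟩ := Part.dom_iff_mem.1 hd
      obtain ⟨k, hk⟩ := evaln_complete.1 hx
      exact absurd (Option.isSome_iff_exists.2 ⟨x, hk⟩) ((hdom c k).1 (hall k))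
    · intro hnd k
      refine (hdom c k).2 fun hs => hnd ?_
      obtain ⟨x, hx⟩ := Option.isSome_iff_exists.1 hs
      exact Part.dom_iff_mem.2 ⟨x, evaln_sound hx⟩
  exact ComputablePred.halting_problem_not_re 0 h2
end

section
/- The complement of the set of total codes is not recursively enumerable. -/
open Nat.Partrec Nat.Partrec.Code

theorem total_codes_compl_not_re :
    ¬ REPred (fun c : Nat.Partrec.Code => ¬ ∀ n, (c.eval n).Dom) := by
  intro h
  apply ComputablePred.halting_problem_not_re 0
  have hf : Computable fun c : Code => c.comp (Code.const 0) :=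
    (Nat.Partrec.Code.primrec₂_comp.comp Primrec.id
      (Primrec.const (Code.const 0))).to_comp
  have := h.comp hf
  exact this.of_eq fun c => by
    have he : ∀ n, ((c.comp (Code.const 0)).eval n) = c.eval 0 := fun n => by
      simp [eval, eval_const]
      exact Part.bind_some 0 c.eval
    have hp : (¬∀ n, ((c.comp (Code.const 0)).eval n).Dom) = (¬(c.eval 0).Dom) := by
      simp only [he]; simp
    show (Part.assert (¬ ∀ n, ((c.comp (Code.const 0)).eval n).Dom) fun _ => Part.some ())
        = Part.assert (¬(c.eval 0).Dom) fun _ => Part.some ()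
    rw [hp]
end

section
/- No computable enumeration of total codes is complete: for every partial computable function F : ℕ →. ℕ whose domain consists only of (encodings of) total codes, there exists a total code whose encoding is not in the domain of F. -/
open Nat.Partrec Nat.Partrec.Code

theorem no_complete_enumeration (F : ℕ →. ℕ) (hF : Partrec F)
    (hdom : ∀ n ∈ F.Dom, ∀ m, ((Denumerable.ofNat Nat.Partrec.Code n).eval m).Dom) :
    ∃ c : Nat.Partrec.Code, (∀ n, (c.eval n).Dom) ∧ Encodable.encode c ∉ F.Dom := by
  by_cases hemp : F.Dom = ∅
  · exact ⟨Nat.Partrec.Code.zero, fun n => trivial, by simp [hemp]⟩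
  · obtain ⟨n₀, hn₀⟩ := Set.nonempty_iff_ne_empty.2 hemp
    obtain ⟨cF, hcF⟩ := exists_code.1 (Partrec.nat_iff.1 hF)
    -- enumeration of F.Dom
    set e : ℕ → ℕ := fun p =>
      bif (evaln p.unpair.2 cF p.unpair.1).isSome then p.unpair.1 else n₀ with he
    have hecomp : Computable e := by
      apply Computable.cond
      · exact Primrec.to_comp <| Primrec.option_isSome.comp <|
          primrec_evaln.comp <| ((Primrec.snd.comp Primrec.unpair).pair
            (Primrec.const cF)).pair (Primrec.fst.comp Primrec.unpair)
      · exact (Primrec.fst.comp Primrec.unpair).to_comp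
      · exact Computable.const n₀
    have hedom : ∀ k, e k ∈ F.Dom := by
      intro k
      simp only [he]
      cases h : (evaln k.unpair.2 cF k.unpair.1).isSome with
      | true =>
        obtain ⟨x, hx⟩ := Option.isSome_iff_exists.1 h
        have hx' : x ∈ cF.eval k.unpair.1 := evaln_complete.2 ⟨_, hx⟩
        rw [hcF] at hx'
        simp only [Bool.cond_true]
        exact Part.dom_iff_mem.2 ⟨x, hx'⟩
      | false => simpa using hn₀
    have hsurj : ∀ n ∈ F.Dom, ∃ k, e k = n := by
      intro n hn
      obtain ⟨x, hx⟩ := Part.dom_iff_mem.1 hn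
      have hx' : x ∈ cF.eval n := by rw [hcF]; exact hx
      obtain ⟨s, hs⟩ := evaln_complete.1 hx'
      refine ⟨Nat.pair n s, ?_⟩
      simp [he, Option.isSome_iff_exists.2 ⟨x, hs⟩]
    -- diagonal function
    set g : ℕ →. ℕ :=
      fun n => ((Denumerable.ofNat Nat.Partrec.Code (e n)).eval n).map (· + 1) with hg
    have hgp : Partrec g := by
      apply Partrec.map
      · exact eval_part.comp ((Computable.ofNat _).comp hecomp) Computable.id
      · exact (Primrec.succ.comp Primrec.snd).to_comp.to₂
    obtain ⟨c, hc⟩ := exists_code.1 (Partrec.nat_iff.1 hgp)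
    refine ⟨c, ?_, ?_⟩
    · intro n
      rw [hc]
      exact hdom _ (hedom n) n
    · intro hmem
      obtain ⟨k, hk⟩ := hsurj _ hmem
      have hck : c.eval k = ((Denumerable.ofNat Nat.Partrec.Code (e k)).eval k).map (· + 1) := by
        rw [hc]
      rw [hk] at hck
      simp only [Denumerable.ofNat_encode] at hck
      have hdomk : (c.eval k).Dom := by
        rw [hc]; exact hdom _ (hedom k) k
      obtain ⟨m, hm⟩ := Part.dom_iff_mem.1 hdomk
      have hm1 : m + 1 ∈ c.eval k := by
        rw [hck]; exact Part.mem_map _ hm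
      have := Part.mem_unique hm hm1
      omega
end

section
/- Strictly stronger verifiers exist: if W ⊆ Code is an r.e. set consisting only of total codes, then there exists an r.e. set W' consisting only of total codes with W ⊊ W' (strict inclusion). -/
open Nat.Partrec Nat.Partrec.Code

private lemma REPred.or' {α} [Primcodable α] {p q : α → Prop} (hp : REPred p) (hq : REPred q) :
    REPred fun a => p a ∨ q a := by
  obtain ⟨k, hk, H⟩ := Partrec.merge' hp hq
  refine hk.dom_re.of_eq fun a => ?_
  rw [(H a).2]
  simp [Part.assert]

private instance : DecidableEq Nat.Partrec.Code :=
  fun _ _ => decidable_of_iff _ Encodable.encode_inj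

private lemma re_singleton (c : Nat.Partrec.Code) : REPred (· = c) := by
  apply ComputablePred.to_re
  exact ⟨inferInstance, (primrecPred_iff_primrec_decide.1 (Primrec.eq.comp .id (.const c))).to_comp⟩

/-- A nonempty r.e. set of codes is the range of a computable function. -/
private lemma exists_enum (W : Set Nat.Partrec.Code) (hre : REPred (· ∈ W))
    (hne : W.Nonempty) : ∃ e : ℕ → Nat.Partrec.Code, Computable e ∧ Set.range e = W := by
  obtain ⟨d0, hd0⟩ := hne
  -- a partial computable function on ℕ whose domain is the encodings of W
  have hg : Partrec fun n : ℕ => (Part.assert ((Denumerable.ofNat Nat.Partrec.Code n) ∈ W)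
      fun _ => Part.some ()).map fun _ => 0 :=
    (hre.comp (Computable.ofNat _)).map (Computable.const 0).to₂
  obtain ⟨cW, hcW⟩ := exists_code.1 (Partrec.nat_iff.1 hg)
  have hdom : ∀ n : ℕ, (eval cW n).Dom ↔ (Denumerable.ofNat Nat.Partrec.Code n) ∈ W := by
    intro n; rw [hcW]; simp [Part.assert]
  classical
  refine ⟨fun m => if (evaln m.unpair.2 cW m.unpair.1).isSome then
      Denumerable.ofNat Nat.Partrec.Code m.unpair.1 else d0, ?_, ?_⟩
  · apply Computable.of_eq (f := fun m : ℕ =>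
      cond (evaln m.unpair.2 cW m.unpair.1).isSome
        (Denumerable.ofNat Nat.Partrec.Code m.unpair.1) d0)
    · exact Primrec.to_comp <| Primrec.cond
        (Primrec.option_isSome.comp <| primrec_evaln.comp <|
          ((Primrec.snd.comp Primrec.unpair).pair (Primrec.const cW)).pair
            (Primrec.fst.comp Primrec.unpair))
        ((Primrec.ofNat _).comp (Primrec.fst.comp Primrec.unpair)) (Primrec.const d0)
    · intro m; by_cases h : (evaln m.unpair.2 cW m.unpair.1).isSome <;> simp [h]
  · ext c
    constructor
    · rintro ⟨m, rfl⟩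
      by_cases h : (evaln m.unpair.2 cW m.unpair.1).isSome
      · simp only [h, if_true]
        obtain ⟨x, hx⟩ := Option.isSome_iff_exists.1 h
        have := evaln_sound hx
        exact (hdom _).1 (Part.dom_iff_mem.2 ⟨_, this⟩)
      · simpa [h] using hd0
    · intro hc
      have : (eval cW (Encodable.encode c)).Dom := by
        rw [hdom]; simpa using hc
      obtain ⟨x, hx⟩ := Part.dom_iff_mem.1 this
      obtain ⟨k, hk⟩ := evaln_complete.1 hx
      refine ⟨Nat.pair (Encodable.encode c) k, ?_⟩
      simp [Nat.unpair_pair, Option.isSome_iff_exists.2 ⟨_, hk⟩]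

theorem stronger_verifier_exists (W : Set Nat.Partrec.Code)
    (hre : REPred (· ∈ W)) (htot : ∀ c ∈ W, ∀ n, (c.eval n).Dom) :
    ∃ W' : Set Nat.Partrec.Code, REPred (· ∈ W') ∧
      (∀ c ∈ W', ∀ n, (c.eval n).Dom) ∧ W ⊂ W' := by
  by_cases hne : W.Nonempty
  · obtain ⟨e, he, hrange⟩ := exists_enum W hre hne
    have heW : ∀ n, e n ∈ W := fun n => hrange ▸ Set.mem_range_self n
    -- diagonal function
    have hF : Partrec fun n : ℕ => (eval (e n) n).map Nat.succ :=
      (eval_part.comp he Computable.id).map (Computable.succ.comp Computable.snd).to₂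
    obtain ⟨c, hc⟩ := exists_code.1 (Partrec.nat_iff.1 hF)
    have hcdom : ∀ n, (eval c n).Dom := by
      intro n
      rw [hc]
      exact (htot _ (heW n) n)
    have hcW : c ∉ W := by
      intro hmem
      obtain ⟨k, hk⟩ := hrange ▸ hmem
      obtain ⟨x0, h1⟩ := Part.dom_iff_mem.1 (hcdom k)
      have hck : eval c k = (eval (e k) k).map Nat.succ := congrFun hc k
      have h2 : x0 ∈ (eval (e k) k).map Nat.succ := hck ▸ h1
      obtain ⟨x, hx, hxe⟩ := (Part.mem_map_iff _).1 h2
      rw [hk] at hx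
      have := Part.mem_unique h1 hx
      omega
    refine ⟨insert c W, ?_, ?_, ?_⟩
    · exact ((re_singleton c).or' hre).of_eq fun a => by simp [Set.mem_insert_iff]
    · intro d hd n
      rcases hd with rfl | hd
      · exact hcdom n
      · exact htot d hd n
    · exact (Set.ssubset_insert hcW)
  · refine ⟨{Nat.Partrec.Code.zero}, ?_, ?_, ?_⟩
    · exact (re_singleton Nat.Partrec.Code.zero).of_eq fun a => by simp
    · rintro d rfl n
      trivial
    · rw [Set.not_nonempty_iff_eq_empty.1 hne]
      exact ⟨Set.empty_subset _, by simp⟩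
end

section
/- There is no maximal verifier: there is no r.e. set W of total codes such that every r.e. set of total codes is contained in W. -/
open Nat.Partrec Nat.Partrec.Code

theorem no_maximal_verifier :
    ¬ ∃ W : Set Nat.Partrec.Code, REPred (· ∈ W) ∧
      (∀ c ∈ W, ∀ n, (c.eval n).Dom) ∧
      (∀ W' : Set Nat.Partrec.Code, REPred (· ∈ W') →
        (∀ c ∈ W', ∀ n, (c.eval n).Dom) → W' ⊆ W) := by
  rintro ⟨W, hre, htot, hmax⟩
  have hsingle : ∀ c : Code, (∀ n, (c.eval n).Dom) → c ∈ W := by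
    intro c hc
    refine hmax {c} ?_ (by rintro d rfl n; exact hc n) rfl
    have : ComputablePred (fun d : Code => Encodable.encode d = Encodable.encode c) :=
      ⟨inferInstance, (Primrec.eq.comp Primrec.encode (.const _)).decide.to_comp⟩
    exact (this.of_eq (by simp [Encodable.encode_inj, eq_comm])).to_re
  have hzero : Code.zero ∈ W := hsingle Code.zero (fun n => trivial)
  have hre' : Nat.Partrec fun n =>
      (Part.assert ((Denumerable.ofNat Code n) ∈ W) fun _ => Part.some 0) := by
    have := hre.comp (Computable.ofNat Code)
    have := Partrec.nat_iff.1 (this.map (Computable.const 0).to₂)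
    simp at this
    have e : (fun a => Part.map (fun _ => (0 : ℕ)) (Part.assert (Denumerable.ofNat Code a ∈ W)
        fun _ => Part.some ())) = (fun n => Part.assert (Denumerable.ofNat Code n ∈ W)
        fun _ => Part.some 0) := by
      funext n
      by_cases h : Denumerable.ofNat Code n ∈ W <;> simp [h, Part.assert_pos, Part.assert_neg]
    exact e ▸ this
  obtain ⟨cW, hcW⟩ := exists_code.1 hre'
  -- enumeration of W
  set f : ℕ → Code := fun n =>
    if (evaln n.unpair.1 cW n.unpair.2).isSome then Denumerable.ofNat Code n.unpair.2
    else Code.zero with hf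
  have hfW : ∀ n, f n ∈ W := by
    intro n
    simp only [hf]
    split
    · next h =>
      obtain ⟨x, hx⟩ := Option.isSome_iff_exists.1 h
      have : x ∈ eval cW n.unpair.2 := evaln_sound hx
      rw [hcW] at this
      obtain ⟨h1, -⟩ := (Part.mem_assert_iff).1 this
      exact h1
    · exact hzero
  have hfsurj : ∀ c ∈ W, ∃ n, f n = c := by
    intro c hc
    have : (0 : ℕ) ∈ eval cW (Encodable.encode c) := by
      rw [hcW]; exact Part.mem_assert_iff.2 ⟨by simpa using hc, Part.mem_some 0⟩
    obtain ⟨k, hk⟩ := evaln_complete.1 this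
    refine ⟨Nat.pair k (Encodable.encode c), ?_⟩
    have hs : (evaln k cW (Encodable.encode c)).isSome = true :=
      Option.isSome_iff_exists.2 ⟨_, hk⟩
    simp [hf, Nat.unpair_pair, hs]
  have hfcomp : Computable f := by
    have h1 : Primrec fun n : ℕ => (evaln n.unpair.1 cW n.unpair.2) :=
      primrec_evaln.comp (((Primrec.fst.comp .unpair).pair (.const cW)).pair
        (Primrec.snd.comp .unpair))
    have h2 : PrimrecPred fun n : ℕ => (evaln n.unpair.1 cW n.unpair.2).isSome = true :=
      Primrec.primrecPred ((Primrec.option_isSome.comp h1).of_eq (by simp))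
    exact (Primrec.ite h2
      ((Primrec.ofNat Code).comp (Primrec.snd.comp .unpair)) (.const Code.zero)).to_comp
  have hdom : ∀ n, (eval (f n) n).Dom := fun n => htot _ (hfW n) n
  -- diagonal function
  set g : ℕ → ℕ := fun n => (eval (f n) n).get (hdom n) + 1 with hg
  have hgcomp : Computable g := by
    have h1 : Partrec fun n : ℕ => (eval (f n) n).map (· + 1) :=
      (eval_part.comp hfcomp Computable.id).map (Computable.succ.comp Computable.snd).to₂
    exact h1.of_eq_tot fun n => Part.mem_map _ (Part.get_mem (hdom n))
  obtain ⟨cg, hcg⟩ := exists_code.1 (Partrec.nat_iff.1 hgcomp.partrec)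
  have hcgW : cg ∈ W := hsingle cg (by intro n; rw [hcg]; trivial)
  obtain ⟨k, hk⟩ := hfsurj cg hcgW
  have : g k = g k + 1 := by
    conv_lhs => rw [hg]
    simp only [hk]
    have : eval cg k = Part.some (g k) := by rw [hcg]; rfl
    simp [this]
  omega
end

section
/- The totality predicate is Π⁰₂-hard in the following concrete sense: for every r.e. predicate R on ℕ × ℕ, there is a computable function g : ℕ → Code such that for all n, the code g n is total if and only if ∀ m, ∃ k, R (n, m) holds witnessed within k steps — equivalently, ∀ m, (some fixed partial computable function applied to (n,m)) halts. -/
open Nat.Partrec Nat.Partrec.Code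

theorem totality_pi2_hard (f : ℕ × ℕ →. ℕ) (hf : Partrec f) :
    ∃ g : ℕ → Nat.Partrec.Code, Computable g ∧
      ∀ n, (∀ m, ((g n).eval m).Dom) ↔ ∀ m, (f (n, m)).Dom := by
  have h1 : Partrec (fun n : ℕ => f (Nat.unpair n)) :=
    hf.comp Primrec.unpair.to_comp
  obtain ⟨c, hc⟩ := exists_code.1 (Partrec.nat_iff.1 h1)
  refine ⟨fun n => c.curry n, (Primrec₂.comp Code.primrec₂_curry (Primrec.const c) Primrec.id).to_comp, fun n => ?_⟩
  constructor <;> intro h m <;> have := h m <;> simpa [eval_curry, hc] using this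
end

section
/- There is a computable function D : Code → Code such that for every code e, if every natural number enumerated by e (i.e., every n in the r.e. set with index e) is the encoding of a total code, then D e is total and D e is not in the r.e. set with index e. -/
open Nat.Partrec Nat.Partrec.Code

private theorem param_fix {f : Nat.Partrec.Code → Nat.Partrec.Code → Nat.Partrec.Code}
    (hf : Computable₂ f) :
    ∃ D : Nat.Partrec.Code → Nat.Partrec.Code, Computable D ∧
      ∀ e, eval (f e (D e)) = eval (D e) := by
  let g : ℕ → ℕ →. ℕ := fun x y => eval (Denumerable.ofNat Code x) x >>= fun b =>
    eval (Denumerable.ofNat Code b) y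
  have hg : Partrec₂ g :=
    (eval_part.comp ((Computable.ofNat _).comp Computable.fst) Computable.fst).bind
      (eval_part.comp ((Computable.ofNat _).comp Computable.snd)
        (Computable.snd.comp Computable.fst)).to₂
  obtain ⟨cg, eg⟩ := exists_code.1 hg
  have eg' : ∀ a n, eval cg (Nat.pair a n) = Part.map Encodable.encode (g a n) := by
    simp [eg]
  let FF : ℕ → Code := fun p => f (Denumerable.ofNat Code (Nat.unpair p).1)
    (curry cg (Nat.unpair p).2)
  have hFF : Computable FF :=
    hf.comp ((Computable.ofNat _).comp (Computable.fst.comp Computable.unpair))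
      ((primrec₂_curry.comp (Primrec.const cg) Primrec.snd).to_comp.comp Computable.unpair)
  obtain ⟨cFF, eFF⟩ := exists_code.1 hFF
  refine ⟨fun e => curry cg (Encodable.encode (curry cFF (Encodable.encode e))), ?_, ?_⟩
  · exact (Primrec₂.to_comp primrec₂_curry).comp (Computable.const cg)
      (Computable.encode.comp ((Primrec₂.to_comp primrec₂_curry).comp (Computable.const cFF)
        Computable.encode))
  · intro e
    funext y
    set x : ℕ := Encodable.encode (curry cFF (Encodable.encode e)) with hx
    have h1 : eval (curry cg x) y = g x y := by
      rw [eval_curry, eg']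
      simp [Part.map_id']
    have h2 : g x y = eval (f e (curry cg x)) y := by
      show (eval (Denumerable.ofNat Code x) x >>= fun b =>
        eval (Denumerable.ofNat Code b) y) = _
      rw [hx]
      simp only [Denumerable.ofNat_encode, eval_curry, eFF]
      simp [FF]
    rw [h1, h2]

theorem effective_diagonalization :
    ∃ D : Nat.Partrec.Code → Nat.Partrec.Code, Computable D ∧
      ∀ e : Nat.Partrec.Code,
        (∀ n, (e.eval n).Dom →
          ∀ m, ((Denumerable.ofNat Nat.Partrec.Code n).eval m).Dom) →
        (∀ m, ((D e).eval m).Dom) ∧ ¬ (e.eval (Encodable.encode (D e))).Dom := by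
  -- the partial function H (e, c) m : halts with 0 iff e has not halted on (encode c) in m steps
  let H : ℕ →. ℕ := fun p =>
    Option.casesOn (evaln (Nat.unpair p).2 (Denumerable.ofNat Code (Nat.unpair (Nat.unpair p).1).1)
      (Nat.unpair (Nat.unpair p).1).2) (Part.some 0) (fun _ => Part.none)
  have hH : Partrec H := by
    refine Partrec.optionCasesOn_right ?_ (Computable.const 0) (Partrec.none.comp Computable.fst).to₂
    have := primrec_evaln.to_comp
    exact this.comp
      (((Computable.snd.comp Computable.unpair).pair
        ((Computable.ofNat Code).comp (Computable.fst.comp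
          (Computable.unpair.comp (Computable.fst.comp Computable.unpair))))).pair
        (Computable.snd.comp (Computable.unpair.comp (Computable.fst.comp Computable.unpair))))
  obtain ⟨cH, ecH⟩ := exists_code.1 (Partrec.nat_iff.1 hH)
  -- the (total) map (e, c) ↦ a code for m ↦ H (e, c) m
  let F : Code → Code → Code := fun e c =>
    curry cH (Nat.pair (Encodable.encode e) (Encodable.encode c))
  have hF : Computable₂ F :=
    (Primrec₂.to_comp primrec₂_curry).comp (Computable.const cH)
      ((Primrec₂.natPair.comp (Primrec.encode.comp Primrec.fst)
        (Primrec.encode.comp Primrec.snd)).to_comp)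
  obtain ⟨D, hD, hfix⟩ := param_fix hF
  have key : ∀ e m, eval (D e) m =
      Option.casesOn (evaln m e (Encodable.encode (D e))) (Part.some 0)
        (fun _ => (Part.none : Part ℕ)) := by
    intro e m
    rw [← hfix e]
    show eval (curry cH _) m = _
    rw [eval_curry, ecH]
    simp [H]
  refine ⟨D, hD, fun e he => ?_⟩
  have hnot : ¬ (e.eval (Encodable.encode (D e))).Dom := by
    intro hdom
    obtain ⟨v, hv⟩ := Part.dom_iff_mem.1 hdom
    obtain ⟨k, hk⟩ := evaln_complete.1 hv
    have htot := he (Encodable.encode (D e)) hdom k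
    rw [Denumerable.ofNat_encode] at htot
    rw [key e k, hk] at htot
    exact htot
  refine ⟨fun m => ?_, hnot⟩
  have hnone : evaln m e (Encodable.encode (D e)) = Option.none := by
    cases hv : evaln m e (Encodable.encode (D e)) with
    | none => rfl
    | some v =>
      exact absurd (Part.dom_iff_mem.2 ⟨v, evaln_complete.2 ⟨m, by rw [hv]; rfl⟩⟩) hnot
  rw [key e m, hnone]
  trivial
end

section
/- The collection of verifiers is not effectively enumerable: there is no r.e. set E of naturals such that (a) every e ∈ E is an index of an r.e. set consisting only of (encodings of) total codes, and (b) for every total code c, some e ∈ E indexes an r.e. set containing the encoding of c. -/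
open Nat.Partrec Nat.Partrec.Code

theorem verifiers_not_effectively_enumerable :
    ¬ ∃ E : Set ℕ, REPred (· ∈ E) ∧
      (∀ e ∈ E, ∀ n, ((Denumerable.ofNat Nat.Partrec.Code e).eval n).Dom →
        ∀ m, ((Denumerable.ofNat Nat.Partrec.Code n).eval m).Dom) ∧
      (∀ c : Nat.Partrec.Code, (∀ n, (c.eval n).Dom) →
        ∃ e ∈ E, ((Denumerable.ofNat Nat.Partrec.Code e).eval (Encodable.encode c)).Dom) := by
  rintro ⟨E, hre, hsound, hcomplete⟩
  -- code for E
  have h1 : Partrec fun n : ℕ => (Part.assert (n ∈ E) fun _ => Part.some ()).map fun _ => 0 :=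
    hre.map (Computable.const 0).to₂
  obtain ⟨cE, hcE⟩ := exists_code.1 (Partrec.nat_iff.1 h1)
  have hcEdom : ∀ e, (cE.eval e).Dom ↔ e ∈ E := by
    intro e; rw [hcE]
    simp only [Part.map_Dom]
    exact ⟨fun ⟨h, _⟩ => h, fun h => ⟨h, trivial⟩⟩
  -- default total code : zero
  have hzero : ∀ m, ((Code.zero).eval m).Dom := by intro m; simp only [eval]; exact Part.some_dom 0
  set n₀ : ℕ := Encodable.encode Code.zero with hn0
  -- enumeration function
  set enum : ℕ → ℕ := fun m =>
    if ((evaln m.unpair.1.unpair.1 cE m.unpair.1.unpair.2).isSome &&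
        (evaln m.unpair.1.unpair.1 (Denumerable.ofNat Code m.unpair.1.unpair.2)
          m.unpair.2).isSome) = true
    then m.unpair.2 else n₀ with henum
  -- enum always lands on (the encoding of) a total code
  have htot : ∀ m k, ((Denumerable.ofNat Code (enum m)).eval k).Dom := by
    intro m k
    by_cases h : ((evaln m.unpair.1.unpair.1 cE m.unpair.1.unpair.2).isSome &&
        (evaln m.unpair.1.unpair.1 (Denumerable.ofNat Code m.unpair.1.unpair.2)
          m.unpair.2).isSome) = true
    · rw [Bool.and_eq_true] at h
      have h1 := h
      obtain ⟨x, hx⟩ := Option.isSome_iff_exists.1 h1.1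
      obtain ⟨y, hy⟩ := Option.isSome_iff_exists.1 h1.2
      have he : m.unpair.1.unpair.2 ∈ E := by
        rw [← hcEdom]
        exact Part.dom_iff_mem.2 ⟨x, evaln_complete.2 ⟨_, hx⟩⟩
      have hd : ((Denumerable.ofNat Code m.unpair.1.unpair.2).eval m.unpair.2).Dom :=
        Part.dom_iff_mem.2 ⟨y, evaln_complete.2 ⟨_, hy⟩⟩
      have := hsound _ he _ hd k
      simpa [henum, h] using this
    · simp only [henum, if_neg h, hn0, Denumerable.ofNat_encode]
      exact hzero k
  -- enum is computable
  have henumc : Computable enum := by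
    have hk : Primrec fun m : ℕ => m.unpair.1.unpair.1 :=
      Primrec.fst.comp (Primrec.unpair.comp (Primrec.fst.comp Primrec.unpair))
    have he' : Primrec fun m : ℕ => m.unpair.1.unpair.2 :=
      Primrec.snd.comp (Primrec.unpair.comp (Primrec.fst.comp Primrec.unpair))
    have hn : Primrec fun m : ℕ => m.unpair.2 := Primrec.snd.comp Primrec.unpair
    have hb1 : Primrec fun m : ℕ => (evaln m.unpair.1.unpair.1 cE m.unpair.1.unpair.2).isSome :=
      Primrec.option_isSome.comp
        (primrec_evaln.comp ((hk.pair (Primrec.const cE)).pair he'))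
    have hb2 : Primrec fun m : ℕ =>
        (evaln m.unpair.1.unpair.1 (Denumerable.ofNat Code m.unpair.1.unpair.2)
          m.unpair.2).isSome :=
      Primrec.option_isSome.comp
        (primrec_evaln.comp ((hk.pair ((Primrec.ofNat Code).comp he')).pair hn))
    have hcond : PrimrecPred fun m : ℕ =>
        ((evaln m.unpair.1.unpair.1 cE m.unpair.1.unpair.2).isSome &&
        (evaln m.unpair.1.unpair.1 (Denumerable.ofNat Code m.unpair.1.unpair.2)
          m.unpair.2).isSome) = true :=
      Primrec.eq.comp ((Primrec.cond hb1 hb2 (Primrec.const false)).of_eq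
        (fun m => (Bool.cond_eq_ite _ _ _).trans (by cases h1 : (evaln m.unpair.1.unpair.1 cE m.unpair.1.unpair.2).isSome <;> simp [h1]))) (Primrec.const true)
    exact (Primrec.ite hcond hn (Primrec.const n₀)).to_comp
  -- the diagonal function
  have hG : Partrec fun m : ℕ => ((Denumerable.ofNat Code (enum m)).eval m).map Nat.succ :=
    ((eval_part.comp ((Computable.ofNat Code).comp henumc) Computable.id).map
      (Computable.succ.comp Computable.snd).to₂)
  obtain ⟨c, hc⟩ := exists_code.1 (Partrec.nat_iff.1 hG)
  have hctot : ∀ m, (c.eval m).Dom := by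
    intro m; rw [hc]
    exact Part.dom_iff_mem.2 ⟨_, Part.mem_map _ (Part.get_mem (htot m m))⟩
  obtain ⟨e, heE, hed⟩ := hcomplete c hctot
  -- find witnesses
  obtain ⟨k₁, x, hx⟩ : ∃ k x, x ∈ evaln k cE e := by
    obtain ⟨x, hx⟩ := Part.dom_iff_mem.1 ((hcEdom e).2 heE)
    obtain ⟨k, hk⟩ := evaln_complete.1 hx
    exact ⟨k, x, hk⟩
  obtain ⟨k₂, y, hy⟩ : ∃ k y, y ∈ evaln k (Denumerable.ofNat Code e) (Encodable.encode c) := by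
    obtain ⟨y, hy⟩ := Part.dom_iff_mem.1 hed
    obtain ⟨k, hk⟩ := evaln_complete.1 hy
    exact ⟨k, y, hk⟩
  set K := max k₁ k₂
  set m := Nat.pair (Nat.pair K e) (Encodable.encode c) with hm
  have hcondm : ((evaln m.unpair.1.unpair.1 cE m.unpair.1.unpair.2).isSome &&
        (evaln m.unpair.1.unpair.1 (Denumerable.ofNat Code m.unpair.1.unpair.2)
          m.unpair.2).isSome) = true := by
    simp only [hm, Nat.unpair_pair]
    rw [Bool.and_eq_true]
    constructor
    · exact Option.isSome_iff_exists.2 ⟨x, evaln_mono (le_max_left _ _) hx⟩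
    · exact Option.isSome_iff_exists.2 ⟨y, evaln_mono (le_max_right _ _) hy⟩
  have hem : enum m = Encodable.encode c := by
    simp only [henum, if_pos hcondm, hm, Nat.unpair_pair]
    rw [if_pos (by simpa only [hm, Nat.unpair_pair] using hcondm)]
  -- contradiction
  have heq := congrFun hc m
  rw [hem, Denumerable.ofNat_encode] at heq
  obtain ⟨v, hv⟩ := Part.dom_iff_mem.1 (hctot m)
  have hv' : v ∈ (c.eval m).map Nat.succ := heq ▸ hv
  obtain ⟨w, hw, hws⟩ := (Part.mem_map_iff _).1 hv'
  have : w = v := Part.mem_unique hw hv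
  omega
end

section
/- If the set of total codes were r.e., then the halting problem would be decidable — hence the set of total codes is not r.e. (via this reduction). -/
open Nat.Partrec Nat.Partrec.Code

private theorem aux_partrec :
    Partrec fun x : ℕ => Part.assert
      (evaln x.unpair.2 (Denumerable.ofNat Nat.Partrec.Code x.unpair.1) 0 = Option.none)
      (fun _ => Part.some 0) := by
  have hp : ComputablePred fun x : ℕ =>
      evaln x.unpair.2 (Denumerable.ofNat Nat.Partrec.Code x.unpair.1) 0 = Option.none :=
    ⟨by infer_instance, by
      have hev : Primrec fun x : ℕ =>
          evaln x.unpair.2 (Denumerable.ofNat Nat.Partrec.Code x.unpair.1) 0 :=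
        primrec_evaln.comp <| ((Primrec.snd.comp Primrec.unpair).pair
          ((Primrec.ofNat Nat.Partrec.Code).comp (Primrec.fst.comp Primrec.unpair))).pair
          (Primrec.const 0)
      exact (Primrec.eq.comp hev (Primrec.const Option.none)).computablePred.decide⟩
  have := (hp.to_re.map ((Computable.const 0).comp Computable.fst).to₂)
  exact this.of_eq fun x => Part.ext fun y => by simp [Part.assert]

theorem totality_not_re_via_halting_reduction :
    (∃ h : Nat.Partrec.Code × ℕ → Nat.Partrec.Code, Computable h ∧
      ∀ p : Nat.Partrec.Code × ℕ,
        (∀ n, ((h p).eval n).Dom) ↔ (p.1.eval p.2).Dom) ∧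
    ¬ REPred (fun c : Nat.Partrec.Code => ∀ n, (c.eval n).Dom) := by
  constructor
  · refine ⟨fun p => p.1.comp (Nat.Partrec.Code.const p.2),
      (primrec₂_comp.comp Primrec.fst (primrec_const.comp Primrec.snd)).to_comp, fun p => ?_⟩
    have he : ∀ m, ((p.1.comp (Nat.Partrec.Code.const p.2)).eval m) = p.1.eval p.2 := by
      intro m; simp [eval, eval_const]; exact Part.bind_some _ _
    constructor
    · intro h; simpa [he 0] using h 0
    · intro h m; simpa [he m] using h
  · intro H
    obtain ⟨cF, hcF⟩ := exists_code.1 (Partrec.nat_iff.1 aux_partrec)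
    set g : Nat.Partrec.Code → Nat.Partrec.Code :=
      fun c => cF.curry (Encodable.encode c) with hg
    have hgc : Computable g :=
      (primrec₂_curry.comp (Primrec.const cF) Primrec.encode).to_comp
    have key : ∀ c, (∀ m, ((g c).eval m).Dom) ↔ ¬(c.eval 0).Dom := by
      intro c
      have hev : ∀ m, ((g c).eval m).Dom ↔ evaln m c 0 = Option.none := by
        intro m
        rw [hg]
        simp only [eval_curry, hcF]
        simp [Part.assert]
      constructor
      · intro h hd
        obtain ⟨x, hx⟩ := Part.dom_iff_mem.1 hd
        obtain ⟨k, hk⟩ := evaln_complete.1 hx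
        have := (hev k).1 (h k)
        rw [this] at hk; exact Option.not_mem_none _ hk
      · intro h m
        refine (hev m).2 (Option.eq_none_iff_forall_not_mem.2 fun x hx => ?_)
        exact h (Part.dom_iff_mem.2 ⟨x, evaln_complete.2 ⟨m, hx⟩⟩)
    have Hq : REPred fun c : Nat.Partrec.Code => ¬(c.eval 0).Dom := by
      have : Partrec fun c : Nat.Partrec.Code =>
          Part.assert (∀ m, ((g c).eval m).Dom) fun _ => Part.some () := H.comp hgc
      exact this.of_eq fun c => by rw [propext (key c)]
    exact ComputablePred.halting_problem 0
      (ComputablePred.computable_iff_re_compl_re'.2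
        ⟨ComputablePred.halting_problem_re 0, Hq⟩)
end

section
/- Strict monotone transfinite-like chain of verifiers indexed by ℕ: there exists a sequence W : ℕ → Set Code such that each W i is an r.e. set of total codes, W i ⊊ W (i+1) for all i, and the predicate (i, c) ↦ c ∈ W i is r.e. -/
open Nat.Partrec Nat.Partrec.Code

private instance inst_s13 : DecidableEq Nat.Partrec.Code := Encodable.decidableEqOfEncodable _

private def chainF (c : Nat.Partrec.Code) : ℕ → Bool
  | 0 => false
  | i + 1 => chainF c i || decide (c = Nat.Partrec.Code.const i)

private lemma chainF_iff (c : Nat.Partrec.Code) (i : ℕ) :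
    chainF c i = true ↔ ∃ k < i, c = Nat.Partrec.Code.const k := by
  induction i with
  | zero => simp [chainF]
  | succ i ih =>
    simp only [chainF, Bool.or_eq_true, decide_eq_true_eq, ih]
    constructor
    · rintro (⟨k, hk, rfl⟩ | rfl)
      · exact ⟨k, Nat.lt_succ_of_lt hk, rfl⟩
      · exact ⟨i, Nat.lt_succ_self i, rfl⟩
    · rintro ⟨k, hk, rfl⟩
      rcases Nat.lt_succ_iff_lt_or_eq.mp hk with h | rfl
      · exact Or.inl ⟨k, h, rfl⟩
      · exact Or.inr rfl

private lemma chainF_primrec : Primrec₂ chainF := by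
  have h : Primrec fun p : Nat.Partrec.Code × ℕ =>
      Nat.rec (motive := fun _ => Bool) false
        (fun k acc => acc || decide (p.1 = Nat.Partrec.Code.const k)) p.2 := by
    have hg : Primrec₂ fun (a : Nat.Partrec.Code × ℕ) (q : ℕ × Bool) =>
        q.2 || decide (a.1 = Nat.Partrec.Code.const q.1) :=
      Primrec.dom_bool₂ (· || ·) |>.comp (Primrec.snd.comp Primrec.snd)
        (Primrec.eq.comp (Primrec.fst.comp Primrec.fst)
          (Nat.Partrec.Code.primrec_const.comp (Primrec.fst.comp Primrec.snd))).decide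
    exact Primrec.nat_rec' Primrec.snd (Primrec.const false) hg
  exact h.of_eq fun ⟨c, i⟩ => by
    induction i with
    | zero => rfl
    | succ i ih => simp [chainF, ← ih]

private lemma chain_computable :
    ComputablePred (fun p : ℕ × Nat.Partrec.Code =>
      ∃ k < p.1, p.2 = Nat.Partrec.Code.const k) := by
  refine ComputablePred.computable_iff.mpr ⟨fun p => chainF p.2 p.1, ?_, ?_⟩
  · exact (chainF_primrec.comp Primrec.snd Primrec.fst).to_comp
  · funext p
    rw [eq_iff_iff, ← chainF_iff p.2 p.1]

theorem strict_chain_of_verifiers :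
    ∃ W : ℕ → Set Nat.Partrec.Code,
      (∀ i, REPred (· ∈ W i)) ∧
      (∀ i, ∀ c ∈ W i, ∀ n, (c.eval n).Dom) ∧
      (∀ i, W i ⊂ W (i + 1)) ∧
      REPred (fun p : ℕ × Nat.Partrec.Code => p.2 ∈ W p.1) := by
  refine ⟨fun i => {c | ∃ k < i, c = Nat.Partrec.Code.const k}, ?_, ?_, ?_, ?_⟩
  · intro i
    have : ComputablePred (fun c : Nat.Partrec.Code =>
        ∃ k < i, c = Nat.Partrec.Code.const k) := by
      refine ComputablePred.computable_iff.mpr ⟨fun c => chainF c i, ?_, ?_⟩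
      · exact (chainF_primrec.comp Primrec.id (Primrec.const i)).to_comp
      · funext c; rw [eq_iff_iff, ← chainF_iff c i]
    exact this.to_re
  · rintro i c ⟨k, _, rfl⟩ n
    simp [Nat.Partrec.Code.eval_const]
  · intro i
    constructor
    · rintro c ⟨k, hk, rfl⟩
      exact ⟨k, Nat.lt_succ_of_lt hk, rfl⟩
    · intro h
      obtain ⟨k, hk, hc⟩ := h ⟨i, Nat.lt_succ_self i, rfl⟩
      exact absurd (Nat.Partrec.Code.const_inj hc) (by omega)
  · exact chain_computable.to_re
end

section
/- The union of the strict chain of verifiers (from the Turing progression up to ω) is itself an r.e. set of total codes, and is strictly contained in yet another r.e. set of total codes. -/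
open Nat.Partrec Nat.Partrec.Code

/-- From an r.e. predicate on a denumerable type, extract a code whose halting set
(under `encode`) is exactly the predicate. -/
lemma re_exists_code {α} [Denumerable α] {p : α → Prop} (h : REPred p) :
    ∃ c : Nat.Partrec.Code, ∀ n : ℕ,
      (c.eval n).Dom ↔ p (Denumerable.ofNat α n) := by
  obtain ⟨c, hc⟩ := Nat.Partrec.Code.exists_code.1 h
  refine ⟨c, fun n => ?_⟩
  rw [hc]
  simp [Denumerable.decode_eq_ofNat, Part.assert]

/-- An existential (over ℕ) projection of an r.e. predicate is r.e. -/
lemma rePred_exists_nat {α} [Denumerable α] {q : ℕ × α → Prop} (h : REPred q) :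
    REPred fun a => ∃ i, q (i, a) := by
  obtain ⟨c, hc⟩ := re_exists_code h
  have hF : Partrec fun a : α => Nat.rfindOpt fun n =>
      Nat.Partrec.Code.evaln n.unpair.2 c (Nat.pair n.unpair.1 (Encodable.encode a)) := by
    apply Partrec.rfindOpt
    have hp : Primrec₂ fun (a : α) (n : ℕ) =>
        Nat.Partrec.Code.evaln n.unpair.2 c (Nat.pair n.unpair.1 (Encodable.encode a)) :=
      Nat.Partrec.Code.primrec_evaln.comp <|
        ((Primrec.snd.comp (Primrec.unpair.comp Primrec.snd)).pair (Primrec.const c)).pair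
          (Primrec₂.natPair.comp (Primrec.fst.comp (Primrec.unpair.comp Primrec.snd))
            (Primrec.encode.comp Primrec.fst))
    exact hp.to_comp
  refine hF.dom_re.of_eq fun a => ?_
  rw [Nat.rfindOpt_dom]
  have key : ∀ i : ℕ, Nat.pair i (Encodable.encode a) = Encodable.encode (i, a) := by
    intro i; simp [Encodable.encode_prod_val]
  constructor
  · rintro ⟨n, x, hx⟩
    have hx' : x ∈ (c.eval (Nat.pair n.unpair.1 (Encodable.encode a))) :=
      Nat.Partrec.Code.evaln_sound hx
    have hd : (c.eval (Nat.pair n.unpair.1 (Encodable.encode a))).Dom :=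
      Part.dom_iff_mem.2 ⟨x, hx'⟩
    rw [key n.unpair.1] at hd
    have := (hc _).1 hd
    rw [Denumerable.ofNat_encode] at this
    exact ⟨_, this⟩
  · rintro ⟨i, hi⟩
    have hd : (c.eval (Encodable.encode (i, a))).Dom := by
      rw [hc]; rwa [Denumerable.ofNat_encode]
    obtain ⟨x, hx⟩ := Part.dom_iff_mem.1 hd
    obtain ⟨k, hk⟩ := Nat.Partrec.Code.evaln_complete.1 hx
    refine ⟨Nat.pair i k, x, ?_⟩
    simp only [Nat.unpair_pair]
    rw [key i]
    exact hk

theorem union_of_chain_is_re_and_not_maximal (W : ℕ → Set Nat.Partrec.Code)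
    (hre : REPred (fun p : ℕ × Nat.Partrec.Code => p.2 ∈ W p.1))
    (htot : ∀ i, ∀ c ∈ W i, ∀ n, (c.eval n).Dom)
    (hchain : ∀ i, W i ⊂ W (i + 1)) :
    REPred (· ∈ ⋃ i, W i) ∧
      (∀ c ∈ ⋃ i, W i, ∀ n, (c.eval n).Dom) ∧
      ∃ W' : Set Nat.Partrec.Code, REPred (· ∈ W') ∧
        (∀ c ∈ W', ∀ n, (c.eval n).Dom) ∧ (⋃ i, W i) ⊂ W' := by
  -- membership in the union is r.e.
  have hU : REPred (· ∈ ⋃ i, W i) := by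
    have := rePred_exists_nat (α := Nat.Partrec.Code) hre
    exact this.of_eq fun c => by simp [Set.mem_iUnion]
  -- all codes in the union are total
  have hUtot : ∀ c ∈ ⋃ i, W i, ∀ n, (Nat.Partrec.Code.eval c n).Dom := by
    intro c hc n
    obtain ⟨_, ⟨i, rfl⟩, hi⟩ := hc
    exact htot i c hi n
  refine ⟨hU, hUtot, ?_⟩
  -- a code cU whose halting set is the union
  obtain ⟨cU, hcU⟩ := re_exists_code hU
  -- the diagonal function
  set f : ℕ →. ℕ := fun n =>
    cond (Nat.Partrec.Code.evaln n.unpair.2 cU n.unpair.1).isSome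
      ((Nat.Partrec.Code.eval (Denumerable.ofNat Nat.Partrec.Code n.unpair.1) n).map Nat.succ)
      (Part.some 0) with hf_def
  have hfp : Partrec f := by
    apply Partrec.cond
    · exact (Primrec.option_isSome.comp <| Nat.Partrec.Code.primrec_evaln.comp <|
        ((Primrec.snd.comp Primrec.unpair).pair (Primrec.const cU)).pair
          (Primrec.fst.comp Primrec.unpair)).to_comp
    · exact (Nat.Partrec.Code.eval_part.comp
        ((Computable.ofNat Nat.Partrec.Code).comp
          ((Computable.fst).comp Computable.unpair)) Computable.id).map
        ((Primrec.succ.comp Primrec.snd).to_comp).to₂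
    · exact (Computable.const (0 : ℕ)).partrec
  -- key: if the guard is true then the code inspected is in the union
  have hguard : ∀ n : ℕ, (Nat.Partrec.Code.evaln n.unpair.2 cU n.unpair.1).isSome = true →
      (Denumerable.ofNat Nat.Partrec.Code n.unpair.1) ∈ ⋃ i, W i := by
    intro n h
    obtain ⟨x, hx⟩ := Option.isSome_iff_exists.1 h
    have : x ∈ cU.eval n.unpair.1 := Nat.Partrec.Code.evaln_sound hx
    exact (hcU _).1 (Part.dom_iff_mem.2 ⟨x, this⟩)
  -- f is total
  have hftot : ∀ n, (f n).Dom := by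
    intro n
    rw [hf_def]
    cases hb : (Nat.Partrec.Code.evaln n.unpair.2 cU n.unpair.1).isSome
    · simp [hb]
    · simpa [hb] using hUtot _ (hguard n hb) n
  obtain ⟨c₀, hc₀⟩ := Nat.Partrec.Code.exists_code.1 (Partrec.nat_iff.1 hfp)
  have hc₀tot : ∀ n, (Nat.Partrec.Code.eval c₀ n).Dom := by
    intro n; rw [hc₀]; exact hftot n
  -- c₀ is not in the union
  have hc₀notin : c₀ ∉ ⋃ i, W i := by
    intro hc₀in
    have hd : (cU.eval (Encodable.encode c₀)).Dom := by
      rw [hcU]; rwa [Denumerable.ofNat_encode]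
    obtain ⟨x, hx⟩ := Part.dom_iff_mem.1 hd
    obtain ⟨k, hk⟩ := Nat.Partrec.Code.evaln_complete.1 hx
    set n := Nat.pair (Encodable.encode c₀) k with hn
    have hg : (Nat.Partrec.Code.evaln k cU (Encodable.encode c₀)).isSome = true :=
      Option.isSome_iff_exists.2 ⟨x, hk⟩
    have heq : Nat.Partrec.Code.eval c₀ n
        = (Nat.Partrec.Code.eval c₀ n).map Nat.succ := by
      conv_lhs => rw [hc₀]
      rw [hf_def]
      simp only [hn, Nat.unpair_pair, Denumerable.ofNat_encode, hg, cond_true]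
    obtain ⟨v, hv⟩ := Part.dom_iff_mem.1 (hc₀tot n)
    have hv' : v ∈ (Nat.Partrec.Code.eval c₀ n).map Nat.succ := heq ▸ hv
    obtain ⟨w, hw, hwv⟩ := (Part.mem_map_iff _).1 hv'
    have : w = v := Part.mem_unique hw hv
    omega
  -- the bigger set
  refine ⟨insert c₀ (⋃ i, W i), ?_, ?_, ?_⟩
  · -- r.e.
    have hG : Partrec fun c : Nat.Partrec.Code =>
        cond (decide (Encodable.encode c = Encodable.encode c₀)) (Part.some ())
          (Part.assert (c ∈ ⋃ i, W i) fun _ => Part.some ()) := by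
      apply Partrec.cond
      · exact (Primrec.eq.comp Primrec.encode (Primrec.const (Encodable.encode c₀))).decide.to_comp
      · exact (Computable.const ()).partrec
      · exact hU
    refine hG.dom_re.of_eq fun c => ?_
    cases hb : decide (Encodable.encode c = Encodable.encode c₀) with
    | true =>
      simp only [hb, cond_true, Part.some_dom]
      have : c = c₀ := Encodable.encode_injective (of_decide_eq_true hb)
      simp [this]
    | false =>
      simp only [hb, cond_false]
      have : ¬ c = c₀ := fun h => of_decide_eq_false hb (by rw [h])
      simp [Part.assert, this]
  · -- totality
    intro c hc n
    rcases hc with rfl | hc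
    · exact hc₀tot n
    · exact hUtot c hc n
  · -- strict inclusion
    constructor
    · exact Set.subset_insert _ _
    · intro hsub
      exact hc₀notin (hsub (Set.mem_insert _ _))
end
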